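/- arXiv:2402.08573 — 2 statements merged into one kernel-verified Lean document; each statement's English description precedes it below -/
import Mathlib

section
/- Define J(α, β; θ) as in the AROVR objective: J(α,β;θ) = α·ℓ(s_{αβ}) + (1/β)U(s_{αβ}) + (1−α)·ℓ(s_{−γ}) − (1/β)U(s_{−γ}), where s_{αβ} minimizes α·ℓ(s)+(1/β)U(s) and s_{−γ} minimizes −(1−α)ℓ(s)+(1/β)U(s). Let 0 < β' < β and α, α' ∈ [0,1] satisfy (1−α)·β = (1−α')·β'. Then J(α, β; θ) ≤ J(α', β'; θ). -/
/-!
Put `γ = (1-α)β = (1-α')β'` and `g = U - γℓ`. Since `αℓ + U/β = ℓ + g/β`, the objective evaluated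
at points `s, t` is `ℓ(s) + (g(s) - g(t))/β`. Minimality of `s_{αβ}` lets us move `s` to `s_{α'β'}`,
and since `s_{-γ}` at `(α', β')` minimizes `g`, moving `t` to it only increases the objective and
makes the numerator nonnegative; the objective then only grows as `β` decreases to `β'`.
-/

noncomputable section

variable {X : Type*} (ℓ U : X → ℝ)

def arovrObjective (α β : ℝ) (s t : X) : ℝ :=
  α * ℓ s + (1/β) * U s + (1-α) * ℓ t - (1/β) * U t

def tiltedEnergy (γ : ℝ) (s : X) : ℝ := U s - γ * ℓ s

variable {ℓ U}

theorem tiltedEnergy_le_of_forall_le {c β : ℝ} (hβ : 0 < β) {x : X}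
    (hx : ∀ s, -c * ℓ x + (1/β) * U x ≤ -c * ℓ s + (1/β) * U s) (s : X) :
    tiltedEnergy ℓ U (c * β) x ≤ tiltedEnergy ℓ U (c * β) s := by
  have h := mul_le_mul_of_nonneg_left (hx s) hβ.le
  unfold tiltedEnergy
  field_simp at h
  linarith

theorem arovrObjective_eq {α β : ℝ} (hβ : β ≠ 0) (s t : X) :
    arovrObjective ℓ U α β s t =
      ℓ s + (tiltedEnergy ℓ U ((1-α) * β) s - tiltedEnergy ℓ U ((1-α) * β) t) / β := by
  unfold arovrObjective tiltedEnergy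
  field_simp
  ring

theorem arovrObjective_le_of_tiltedEnergy_le {α β : ℝ} (hβ : 0 < β) {s t t' : X}
    (ht : tiltedEnergy ℓ U ((1-α) * β) t' ≤ tiltedEnergy ℓ U ((1-α) * β) t) :
    arovrObjective ℓ U α β s t ≤ arovrObjective ℓ U α β s t' := by
  rw [arovrObjective_eq hβ.ne', arovrObjective_eq hβ.ne']
  gcongr

theorem arovrObjective_le_of_le {α α' β β' : ℝ} (hβ' : 0 < β') (hββ' : β' ≤ β)
    (hγ : (1-α) * β = (1-α') * β') {s t : X}
    (ht : tiltedEnergy ℓ U ((1-α) * β) t ≤ tiltedEnergy ℓ U ((1-α) * β) s) :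
    arovrObjective ℓ U α β s t ≤ arovrObjective ℓ U α' β' s t := by
  rw [arovrObjective_eq (hβ'.trans_le hββ').ne', arovrObjective_eq hβ'.ne', ← hγ]
  gcongr

end

theorem stmt_3_general {n : ℕ} (ℓ U : (Fin n → ℝ) → ℝ) (α α' β β' : ℝ)
    (hβ' : 0 < β') (hββ' : β' < β)
    (hγ : (1-α) * β = (1-α') * β')
    (sab sab' sg sg' : Fin n → ℝ)
    (hsab : ∀ s, α * ℓ sab + (1/β) * U sab ≤ α * ℓ s + (1/β) * U s)
    (hsg' : ∀ s, -(1-α') * ℓ sg' + (1/β') * U sg' ≤ -(1-α') * ℓ s + (1/β') * U s) :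
    α * ℓ sab + (1/β) * U sab + (1-α) * ℓ sg - (1/β) * U sg ≤
      α' * ℓ sab' + (1/β') * U sab' + (1-α') * ℓ sg' - (1/β') * U sg' := by
  have hβ : 0 < β := hβ'.trans hββ'
  have hsg'_min := tiltedEnergy_le_of_forall_le hβ' hsg'
  rw [← hγ] at hsg'_min
  calc arovrObjective ℓ U α β sab sg
      ≤ arovrObjective ℓ U α β sab' sg := by
        unfold arovrObjective
        linarith [hsab sab']
    _ ≤ arovrObjective ℓ U α β sab' sg' := arovrObjective_le_of_tiltedEnergy_le hβ (hsg'_min sg)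
    _ ≤ arovrObjective ℓ U α' β' sab' sg' := arovrObjective_le_of_le hβ' hββ'.le hγ (hsg'_min sab')

/-- Proposition 2: if `0 < β' < β` and `(1−α)β = (1−α')β'` (constant adversarial step length),
then `J(α,β) ≤ J(α',β')` for the AROVR objective. Note that the negatively nudged minimizer
`s₋γ` is shared, since `−(1−α)ℓ + (1/β)U` and `−(1−α')ℓ + (1/β')U` have the same minimizers. -/
theorem stmt_3 {n : ℕ} (ℓ U : (Fin n → ℝ) → ℝ) (α α' β β' : ℝ)
    (hβ' : 0 < β') (hββ' : β' < β) (hα0 : 0 ≤ α) (hα1 : α ≤ 1) (hα'0 : 0 ≤ α') (hα'1 : α' ≤ 1)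
    (hγ : (1-α) * β = (1-α') * β')
    (sab sab' sg sg' : Fin n → ℝ)
    (hsab : ∀ s, α * ℓ sab + (1/β) * U sab ≤ α * ℓ s + (1/β) * U s)
    (hsab' : ∀ s, α' * ℓ sab' + (1/β') * U sab' ≤ α' * ℓ s + (1/β') * U s)
    (hsg : ∀ s, -(1-α) * ℓ sg + (1/β) * U sg ≤ -(1-α) * ℓ s + (1/β) * U s)
    (hsg' : ∀ s, -(1-α') * ℓ sg' + (1/β') * U sg' ≤ -(1-α') * ℓ s + (1/β') * U s) :
    α * ℓ sab + (1/β) * U sab + (1-α) * ℓ sg - (1/β) * U sg ≤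
      α' * ℓ sab' + (1/β') * U sab' + (1-α') * ℓ sg' - (1/β') * U sg' :=
  stmt_3_general ℓ U α α' β β' hβ' hββ' hγ sab sab' sg sg' hsab hsg'
end

section
/- Let f : ℝⁿ → ℝⁿ be affine, f(a) = s₀ + D a with D invertible, α ∈ [0,1], and suppose s⁺ − s⁻ = Dᵀ Wᵀ e for some vectors W (matrix) and e. If f⁻¹(α s⁺ + (1−α)s⁻) = a₀ for some a₀ ∈ ℝⁿ, then s⁻ = f(a₀ − α Wᵀ e) and s⁺ = f(a₀ + (1−α) Wᵀ e). -/
/-! Since `α s⁺ + (1 - α) s⁻ = s⁻ + α (s⁺ - s⁻)`, both endpoints are shifts of `f a₀` along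
`s⁺ - s⁻ = D (Wᵀ e)` (using `Dᵀ = D`), and an affine `f` with linear part `D` shifts its value by
`D (Wᵀ e)` exactly when its argument shifts by `Wᵀ e`. -/

open Matrix

theorem eq_sub_smul_and_eq_add_smul_of_smul_add_smul_eq {R M : Type*} [CommRing R] [AddCommGroup M]
    [Module R M] {α : R} {sp sm m v : M} (hdiff : sp - sm = v)
    (hmean : α • sp + (1 - α) • sm = m) :
    sm = m - α • v ∧ sp = m + (1 - α) • v := by
  obtain rfl : sp = sm + v := eq_add_of_sub_eq' hdiff
  subst hmean
  constructor <;> module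

theorem stmt_15_general {n : ℕ} (D W : Matrix (Fin n) (Fin n) ℝ) (hD : D.IsSymm)
    (s0 : Fin n → ℝ)
    (f : (Fin n → ℝ) → (Fin n → ℝ)) (hf : ∀ a, f a = s0 + D.mulVec a)
    (α : ℝ)
    (sp sm e a0 : Fin n → ℝ)
    (hdiff : sp - sm = Dᵀ.mulVec (Wᵀ.mulVec e))
    (hmean : α • sp + (1-α) • sm = f a0) :
    sm = f (a0 - α • Wᵀ.mulVec e) ∧ sp = f (a0 + (1-α) • Wᵀ.mulVec e) := by
  rw [hD] at hdiff
  have hf_sub : f (a0 - α • Wᵀ.mulVec e) = f a0 - α • D.mulVec (Wᵀ.mulVec e) := by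
    rw [hf, hf, mulVec_sub, mulVec_smul, add_sub_assoc]
  have hf_add : f (a0 + (1 - α) • Wᵀ.mulVec e) = f a0 + (1 - α) • D.mulVec (Wᵀ.mulVec e) := by
    rw [hf, hf, mulVec_add, mulVec_smul, add_assoc]
  rw [hf_sub, hf_add]
  exact eq_sub_smul_and_eq_add_smul_of_smul_add_smul_eq hdiff hmean

/-- Core algebraic step of the DP⊤ hidden-layer updates: for affine `f(a) = s₀ + Da` with
`D` invertible (and symmetric, as assumed for activation derivatives), if
`s⁺ − s⁻ = DᵀWᵀe` and `f⁻¹(αs⁺ + (1−α)s⁻) = a₀` (i.e. `αs⁺ + (1−α)s⁻ = f(a₀)`), then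
`s⁻ = f(a₀ − αWᵀe)` and `s⁺ = f(a₀ + (1−α)Wᵀe)`. -/
theorem stmt_15 {n : ℕ} (D W : Matrix (Fin n) (Fin n) ℝ) [Invertible D] (hD : D.IsSymm)
    (s0 : Fin n → ℝ)
    (f : (Fin n → ℝ) → (Fin n → ℝ)) (hf : ∀ a, f a = s0 + D.mulVec a)
    (α : ℝ) (hα0 : 0 ≤ α) (hα1 : α ≤ 1)
    (sp sm e a0 : Fin n → ℝ)
    (hdiff : sp - sm = Dᵀ.mulVec (Wᵀ.mulVec e))
    (hmean : α • sp + (1-α) • sm = f a0) :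
    sm = f (a0 - α • Wᵀ.mulVec e) ∧ sp = f (a0 + (1-α) • Wᵀ.mulVec e) :=
  stmt_15_general D W hD s0 f hf α sp sm e a0 hdiff hmean
end
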